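/- Let X and Y be modular Riesz bases for a Hilbert A-module E and let U be a bounded adjointable operator on ℓ²(A). Then U is invertible if and only if the generalized Riesz multiplier M_{U,Y,X} = T_Y* U T_X is invertible; moreover, when U is invertible, M_{U,Y,X}⁻¹ = M_{U⁻¹, X̃, Ỹ} where X̃, Ỹ are the canonical dual Riesz bases. -/

import Mathlib

open scoped RightActions

/-- The Hilbert C⋆-module class of the older library: a right `A`-module structure
(`SMul Aᵐᵒᵖ E`) with an `A`-valued inner product, `A`-linear on the right in the second
argument. (Mathlib's `CStarModule` is now a left-module class.) -/
class CStarModuleOld (A : outParam <| Type*) (E : Type*) [NonUnitalSemiring A] [StarRing A] [Module ℂ A]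
    [AddCommGroup E] [Module ℂ E] [PartialOrder A] [SMul Aᵐᵒᵖ E] [Norm A] [Norm E]
    extends Inner A E where
  inner_add_right {x} {y} {z} : inner x (y + z) = inner x y + inner x z
  inner_self_nonneg {x} : 0 ≤ inner x x
  inner_self {x} : inner x x = 0 ↔ x = 0
  inner_op_smul_right {a : A} {x y : E} : inner x (y <• a) = inner x y * a
  inner_smul_right_complex {z : ℂ} {x} {y} : inner x (z • y) = z • inner x y
  star_inner x y : star (inner x y) = inner y x
  norm_eq_sqrt_norm_inner_self x : ‖x‖ = √‖inner x x‖

/-- Two maps between Hilbert C*-modules form an adjoint pair: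
`⟪T x, y⟫ = ⟪x, S y⟫` for all `x, y`. -/
def IsAdjointPairCM (A : Type*) [CStarAlgebra A] [PartialOrder A] [StarOrderedRing A]
    {E F : Type*} [NormedAddCommGroup E] [NormedSpace ℂ E] [SMul Aᵐᵒᵖ E] [CStarModuleOld A E]
    [NormedAddCommGroup F] [NormedSpace ℂ F] [SMul Aᵐᵒᵖ F] [CStarModuleOld A F]
    (T : E → F) (S : F → E) : Prop :=
  ∀ (x : E) (y : F), (inner A (T x) y : A) = inner A x (S y)

section Defs
variable {A : Type*} [CStarAlgebra A] [PartialOrder A] [StarOrderedRing A]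
variable {E L : Type*} [NormedAddCommGroup E] [NormedSpace ℂ E] [SMul Aᵐᵒᵖ E] [CStarModuleOld A E]
  [NormedAddCommGroup L] [NormedSpace ℂ L] [SMul Aᵐᵒᵖ L] [CStarModuleOld A L]

/-- `x` is a standard Bessel sequence with Bessel bound `D`:
`∑ₙ ⟪v, xₙ⟫⟪xₙ, v⟫` is norm-convergent and bounded by `D ⟪v, v⟫`. -/
def IsBesselSeq (x : ℕ → E) (D : ℝ) : Prop :=
  ∀ v : E, Summable (fun n => (inner A v (x n) : A) * inner A (x n) v) ∧
    (∑' n, (inner A v (x n) : A) * inner A (x n) v) ≤ D • (inner A v v : A)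

/-- `x` is a standard frame with frame bounds `C`, `D`. -/
def IsFrameSeq (x : ℕ → E) (C D : ℝ) : Prop :=
  IsBesselSeq x D ∧
    ∀ v : E, C • (inner A v v : A) ≤ ∑' n, (inner A v (x n) : A) * inner A (x n) v

/-- `e` is the standard orthonormal basis of (a copy of) `ℓ²(A)`:
orthonormality together with the reconstruction `v = ∑ₙ eₙ • ⟪eₙ, v⟫`. -/
def IsStdBasis (e : ℕ → L) : Prop :=
  (∀ m n : ℕ, (inner A (e m) (e n) : A) = if m = n then 1 else 0) ∧
    ∀ v : L, HasSum (fun n => e n <• (inner A (e n) v : A)) v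

/-- `T` is the analysis operator of the sequence `x`, relative to the standard
basis `e` of `ℓ²(A)`: the `n`-th coefficient of `T v` is `⟪xₙ, v⟫`. -/
def IsAnalysisOp (e : ℕ → L) (x : ℕ → E) (T : E → L) : Prop :=
  ∀ (v : E) (n : ℕ), (inner A (e n) (T v) : A) = inner A (x n) v

/-- `S` is the synthesis operator of the sequence `x`: `S a = ∑ₙ xₙ • aₙ`. -/
def IsSynthesisOp (e : ℕ → L) (x : ℕ → E) (S : L → E) : Prop :=
  ∀ a : L, HasSum (fun n => x n <• (inner A (e n) a : A)) (S a)

/-- `x` is a modular Riesz basis: the image of the standard basis `e` of `ℓ²(A)`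
under an adjointable invertible operator. -/
def IsModularRieszBasis (e : ℕ → L) (x : ℕ → E) : Prop :=
  ∃ (V : L →L[ℂ] E) (Vinv : E →L[ℂ] L) (Vstar : E →L[ℂ] L),
    Function.LeftInverse Vinv V ∧ Function.RightInverse Vinv V ∧
      IsAdjointPairCM A V Vstar ∧ ∀ n, V (e n) = x n

end Defs

variable {A : Type*} [CStarAlgebra A] [PartialOrder A] [StarOrderedRing A]
variable {E F L : Type*}
  [NormedAddCommGroup E] [NormedSpace ℂ E] [SMul Aᵐᵒᵖ E] [CStarModuleOld A E]
  [NormedAddCommGroup F] [NormedSpace ℂ F] [SMul Aᵐᵒᵖ F] [CStarModuleOld A F]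
  [NormedAddCommGroup L] [NormedSpace ℂ L] [SMul Aᵐᵒᵖ L] [CStarModuleOld A L]

/-! The analysis operator of a modular Riesz basis `{V eₙ}` is `V*` and its synthesis operator
is `V`, so `T_X` and `T_X*` are invertible. The inverse `S_X⁻¹` of the frame operator is
self-adjoint, hence the canonical dual has analysis operator `T_X S_X⁻¹` and synthesis operator
`S_X⁻¹ T_X*`. Since `T_X S_X⁻¹ T_X* = Id` (and likewise for `Y`), the multiplier
`M = T_Y* U T_X` is inverted by `T_X̃* U⁻¹ T_Ỹ = S_X⁻¹ T_X* U⁻¹ T_Y S_Y⁻¹` when `U` is invertible;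
conversely, as `T_X` is onto and `T_Y*` is injective, `T_X M⁻¹ T_Y*` inverts `U`. -/

open Function

theorem CStarModuleOld.ext_inner_left {b c : E} (h : ∀ v : E, (inner A v b : A) = inner A v c) :
    b = c := by
  have hs : (inner A (b - c) (b - c) : A) + inner A (b - c) c = inner A (b - c) b := by
    rw [← CStarModuleOld.inner_add_right, sub_add_cancel]
  rw [h (b - c), add_eq_right] at hs
  exact sub_eq_zero.mp (CStarModuleOld.inner_self.mp hs)

omit [StarOrderedRing A] in
theorem IsStdBasis.ext {e : ℕ → L} (he : IsStdBasis e) {a b : L}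
    (h : ∀ n, (inner A (e n) a : A) = inner A (e n) b) : a = b := by
  have ha := he.2 a
  simp only [h] at ha
  exact ha.unique (he.2 b)

namespace IsAdjointPairCM

theorem symm {T : E → F} {S : F → E} (h : IsAdjointPairCM A T S) : IsAdjointPairCM A S T :=
  fun y x => by rw [← CStarModuleOld.star_inner x, ← h, CStarModuleOld.star_inner]

theorem comp {T : E → F} {S : F → E} {T' : F → L} {S' : L → F} (h : IsAdjointPairCM A T S)
    (h' : IsAdjointPairCM A T' S') : IsAdjointPairCM A (T' ∘ T) (S ∘ S') :=
  fun x z => (h' (T x) z).trans (h x (S' z))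

theorem unique {T : E → F} {S S' : F → E} (h : IsAdjointPairCM A T S)
    (h' : IsAdjointPairCM A T S') : S = S' :=
  funext fun y => CStarModuleOld.ext_inner_left fun x => (h x y).symm.trans (h' x y)

theorem self_of_rightInverse_comp {T : E → F} {S : F → E} {R : E → E} (h : IsAdjointPairCM A T S)
    (hR : RightInverse R (S ∘ T)) : IsAdjointPairCM A R R := by
  have key : ∀ v w : E, (inner A (R v) w : A) = inner A (T (R v)) (T (R w)) := fun v w => by
    rw [h]; exact congrArg _ (hR w).symm
  intro v w
  rw [key, ← CStarModuleOld.star_inner, ← key, CStarModuleOld.star_inner]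

end IsAdjointPairCM

namespace IsAnalysisOp

omit [StarOrderedRing A] in
theorem unique {e : ℕ → L} (he : IsStdBasis e) {x : ℕ → E} {T T' : E → L}
    (hT : IsAnalysisOp e x T) (hT' : IsAnalysisOp e x T') : T = T' :=
  funext fun v => he.ext fun n => (hT v n).trans (hT' v n).symm

theorem comp {e : ℕ → L} {x : ℕ → E} {T : E → L} {R R' : E → E} (hT : IsAnalysisOp e x T)
    (hR : IsAdjointPairCM A R' R) : IsAnalysisOp e (R' ∘ x) (T ∘ R) :=
  fun v n => (hT (R v) n).trans (hR (x n) v).symm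

end IsAnalysisOp

theorem IsModularRieszBasis.injective_of_isAdjointPair {e : ℕ → L} (he : IsStdBasis e)
    {x : ℕ → E} (hx : IsModularRieszBasis e x) {T : E → L} {S : L → E}
    (hT : IsAnalysisOp e x T) (hTS : IsAdjointPairCM A T S) : Injective S := by
  obtain ⟨V, Vinv, Vstar, hVinv, -, hV, hVe⟩ := hx
  have hVstar : IsAnalysisOp e x Vstar := fun v n => by rw [← hVe n, hV]
  rw [hT.unique he hVstar] at hTS
  rw [hTS.unique hV.symm]
  exact hVinv.injective

theorem Function.LeftInverse.of_comp_of_surjective {α β γ δ : Type*} {S : β → γ} {U : α → β}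
    {T : δ → α} {N : γ → δ} (hT : Surjective T) (h : LeftInverse N (S ∘ U ∘ T)) :
    LeftInverse (T ∘ N ∘ S) U := by
  intro z
  obtain ⟨w, rfl⟩ := hT z
  exact congrArg T (h w)

theorem Function.RightInverse.of_comp_of_injective {α β γ δ : Type*} {S : β → γ} {U : α → β}
    {T : δ → α} {N : γ → δ} (hS : Injective S) (h : RightInverse N (S ∘ U ∘ T)) :
    RightInverse (T ∘ N ∘ S) U :=
  fun w => hS (h (S w))

theorem riesz_multiplier_invertible_iff_general
    (e : ℕ → L) (he : IsStdBasis e)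
    (x y : ℕ → E)
    (hX : IsModularRieszBasis e x) (hY : IsModularRieszBasis e y)
    (TX TY : E →L[ℂ] L) (SX SY : L →L[ℂ] E)
    (hTX : IsAnalysisOp e x TX) (hSX : IsAdjointPairCM A TX SX)
    (hTY : IsAnalysisOp e y TY) (hSY : IsAdjointPairCM A TY SY)
    (SXinv SYinv : E →L[ℂ] E)
    (hSX1 : Function.LeftInverse SXinv (SX.comp TX))
    (hSX2 : Function.RightInverse SXinv (SX.comp TX))
    (hSY2 : Function.RightInverse SYinv (SY.comp TY))
    (xt yt : ℕ → E) (hxt : ∀ n, xt n = SXinv (x n)) (hyt : ∀ n, yt n = SYinv (y n))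
    (Txt Tyt : E →L[ℂ] L) (Sxt : L →L[ℂ] E)
    (hTxt : IsAnalysisOp e xt Txt) (hSxt : IsAdjointPairCM A Txt Sxt)
    (hTyt : IsAnalysisOp e yt Tyt)
    (U : L →L[ℂ] L) :
    ((∃ Uinv : L →L[ℂ] L, Function.LeftInverse Uinv U ∧ Function.RightInverse Uinv U) ↔
      (∃ Minv : E →L[ℂ] E,
        Function.LeftInverse Minv (SY.comp (U.comp TX)) ∧
        Function.RightInverse Minv (SY.comp (U.comp TX)))) ∧
    ∀ Uinv : L →L[ℂ] L, Function.LeftInverse Uinv U → Function.RightInverse Uinv U →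
      Function.LeftInverse (Sxt.comp (Uinv.comp Tyt)) (SY.comp (U.comp TX)) ∧
      Function.RightInverse (Sxt.comp (Uinv.comp Tyt)) (SY.comp (U.comp TX)) := by
  have hSXinj := hX.injective_of_isAdjointPair he hTX hSX
  have hSYinj := hY.injective_of_isAdjointPair he hTY hSY
  have hTX_left : LeftInverse (SXinv ∘ SX) TX := fun v => hSX1 v
  have hTX_right : RightInverse (SXinv ∘ SX) TX :=
    LeftInverse.rightInverse_of_injective (f := SX) (fun v => hSX2 v) hSXinj
  have hSY_right : RightInverse (TY ∘ SYinv) SY := fun v => hSY2 v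
  have hSY_left : LeftInverse (TY ∘ SYinv) SY := hSY_right.rightInverse_of_injective hSYinj
  have hSXinv := hSX.self_of_rightInverse_comp hSX2
  have hTxt' : ⇑Txt = TX ∘ SXinv :=
    hTxt.unique he (by rw [show xt = SXinv ∘ x from funext hxt]; exact hTX.comp hSXinv)
  have hSxt' : ⇑Sxt = SXinv ∘ SX := hSxt.unique (hTxt' ▸ hSXinv.comp hSX)
  have hTyt' : ⇑Tyt = TY ∘ SYinv := hTyt.unique he (by
    rw [show yt = SYinv ∘ y from funext hyt]; exact hTY.comp (hSY.self_of_rightInverse_comp hSY2))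
  have inverse_of_unit : ∀ Uinv : L →L[ℂ] L, LeftInverse Uinv U → RightInverse Uinv U →
      LeftInverse (Sxt.comp (Uinv.comp Tyt)) (SY.comp (U.comp TX)) ∧
      RightInverse (Sxt.comp (Uinv.comp Tyt)) (SY.comp (U.comp TX)) := by
    intro Uinv hU1 hU2
    simp only [ContinuousLinearMap.coe_comp, hSxt', hTyt']
    exact ⟨(hSY_left.comp (hU1.comp hTX_left) :), (hSY_right.comp (hU2.comp hTX_right) :)⟩
  refine ⟨⟨fun ⟨Uinv, hU1, hU2⟩ => ⟨_, inverse_of_unit Uinv hU1 hU2⟩, ?_⟩, inverse_of_unit⟩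
  rintro ⟨Minv, hM1, hM2⟩
  exact ⟨TX.comp (Minv.comp SY), hM1.of_comp_of_surjective (S := SY) (U := U) hTX_right.surjective,
    hM2.of_comp_of_injective (S := SY) (U := U) (T := TX) hSYinj⟩

/-- For modular Riesz bases `X`, `Y`, the symbol `U` is invertible iff the Riesz
multiplier `M_{U,Y,X}` is invertible; in that case `M_{U,Y,X}⁻¹ = M_{U⁻¹,X̃,Ỹ}`,
where `X̃`, `Ỹ` are the canonical duals. -/
theorem riesz_multiplier_invertible_iff
    (e : ℕ → L) (he : IsStdBasis e)
    (x y : ℕ → E)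
    (hX : IsModularRieszBasis e x) (hY : IsModularRieszBasis e y)
    (TX TY : E →L[ℂ] L) (SX SY : L →L[ℂ] E)
    (hTX : IsAnalysisOp e x TX) (hSX : IsAdjointPairCM A TX SX)
    (hTY : IsAnalysisOp e y TY) (hSY : IsAdjointPairCM A TY SY)
    (SXinv SYinv : E →L[ℂ] E)
    (hSX1 : Function.LeftInverse SXinv (SX.comp TX))
    (hSX2 : Function.RightInverse SXinv (SX.comp TX))
    (hSY1 : Function.LeftInverse SYinv (SY.comp TY))
    (hSY2 : Function.RightInverse SYinv (SY.comp TY))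
    (xt yt : ℕ → E) (hxt : ∀ n, xt n = SXinv (x n)) (hyt : ∀ n, yt n = SYinv (y n))
    (Txt Tyt : E →L[ℂ] L) (Sxt : L →L[ℂ] E)
    (hTxt : IsAnalysisOp e xt Txt) (hSxt : IsAdjointPairCM A Txt Sxt)
    (hTyt : IsAnalysisOp e yt Tyt)
    (U : L →L[ℂ] L) :
    ((∃ Uinv : L →L[ℂ] L, Function.LeftInverse Uinv U ∧ Function.RightInverse Uinv U) ↔
      (∃ Minv : E →L[ℂ] E,
        Function.LeftInverse Minv (SY.comp (U.comp TX)) ∧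
        Function.RightInverse Minv (SY.comp (U.comp TX)))) ∧
    ∀ Uinv : L →L[ℂ] L, Function.LeftInverse Uinv U → Function.RightInverse Uinv U →
      Function.LeftInverse (Sxt.comp (Uinv.comp Tyt)) (SY.comp (U.comp TX)) ∧
      Function.RightInverse (Sxt.comp (Uinv.comp Tyt)) (SY.comp (U.comp TX)) :=
  riesz_multiplier_invertible_iff_general e he x y hX hY TX TY SX SY hTX hSX hTY hSY SXinv SYinv
    hSX1 hSX2 hSY2 xt yt hxt hyt Txt Tyt Sxt hTxt hSxt hTyt U
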